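/- Let P be a SPARQL graph pattern built from BGPs using only the AND constructor, and let flat(P) denote the BGP obtained as the union of all BGPs occurring in P (so flat(BGP Q) = Q and flat(AND(P1,P2)) = flat(P1) ∪ flat(P2)). Then for every RDF graph G and every solution mapping μ with dom(μ) = sv(P): μ ∈ ⟦P⟧_G if and only if flat(P)μ ⊆ G. -/
import Mathlib


/-!
Formalization of SPARQL graph-pattern syntax and semantics, following
Pérez et al. and the paper "SPARQL in N3".

* IRIs, blank nodes and literals are three pairwise disjoint infinite sets,
  packaged in the type `RTerm` (the set `T = I ∪ B ∪ L`).
* Variables form a further disjoint infinite set `Var`.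
* A pattern term (`PTerm`) is an element of `T ∪ V`.
* A solution mapping is a partial function from variables to RDF terms,
  modeled as `Var → Option RTerm`.
-/

namespace SparqlN3

/-- RDF terms: IRIs, blank nodes, literals — three disjoint infinite sets. -/
inductive RTerm : Type
  | iri : ℕ → RTerm
  | bnode : ℕ → RTerm
  | lit : ℕ → RTerm
deriving DecidableEq

/-- Variables (an infinite set, disjoint from `RTerm` by typing). -/
abbrev Var : Type := ℕ

/-- Elements of `T ∪ V`. -/
abbrev PTerm : Type := RTerm ⊕ Var

/-- Triple patterns: elements of `(T ∪ V) × (T ∪ V) × (T ∪ V)`. -/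
abbrev TriplePat : Type := PTerm × PTerm × PTerm

/-- Ground RDF triples. -/
abbrev Triple : Type := RTerm × RTerm × RTerm

/-- An RDF graph: a set of triples. -/
abbrev Graph : Type := Set Triple

/-- A basic graph pattern: a finite set of triple patterns. -/
abbrev BGP : Type := Finset TriplePat

/-- A (partial) mapping from variables to RDF terms. -/
abbrev Mapping : Type := Var → Option RTerm

/-- The domain of a mapping. -/
def mdom (μ : Mapping) : Set Var := {x | μ x ≠ none}

/-- A solution mapping has a finite domain. -/
def FiniteDom (μ : Mapping) : Prop := (mdom μ).Finite

/-- Compatibility of two mappings: they agree on the common domain. -/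
def compat (μ₁ μ₂ : Mapping) : Prop :=
  ∀ x a b, μ₁ x = some a → μ₂ x = some b → a = b

/-- Union `μ₁ ∪ μ₂` of two (compatible) mappings. -/
def munion (μ₁ μ₂ : Mapping) : Mapping :=
  fun x => (μ₁ x).elim (μ₂ x) some

def varsPT : PTerm → Finset Var
  | .inl _ => ∅
  | .inr v => {v}

/-- Variables of a triple pattern. -/
def varsTP (t : TriplePat) : Finset Var :=
  varsPT t.1 ∪ varsPT t.2.1 ∪ varsPT t.2.2

/-- Variables of a BGP. -/
def varsBGP (P : BGP) : Finset Var := P.biUnion varsTP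

/-- Substitution on a pattern term: replace variables in the domain of `μ`. -/
def substPT (μ : Mapping) : PTerm → PTerm
  | .inl t => .inl t
  | .inr v => (μ v).elim (.inr v) .inl

/-- Substitution `tμ` on a triple pattern (componentwise). -/
def substTP (μ : Mapping) (t : TriplePat) : TriplePat :=
  (substPT μ t.1, substPT μ t.2.1, substPT μ t.2.2)

/-- Substitution `Pμ` on a BGP (literal replacement of variables in `dom μ`). -/
def substBGP (μ : Mapping) (P : BGP) : BGP := P.image (substTP μ)

/-- View a ground triple as a triple pattern. -/
def toPat (t : Triple) : TriplePat := (.inl t.1, .inl t.2.1, .inl t.2.2)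

/-- `InstIn G μ P` : the instantiation `Pμ` is contained in `G`
(every triple pattern of `P` becomes, under `μ`, a ground triple of `G`). -/
def InstIn (G : Graph) (μ : Mapping) (P : BGP) : Prop :=
  ∀ tp ∈ P, ∃ t ∈ G, substTP μ tp = toPat t

/-- Evaluation of a BGP: `⟦P⟧_G = {μ | dom(μ) = var(P) ∧ Pμ ⊆ G}`. -/
def bgpEval (G : Graph) (P : BGP) : Set Mapping :=
  {μ | mdom μ = ↑(varsBGP P) ∧ InstIn G μ P}

/-- SPARQL graph patterns.  Filter conditions are modeled as predicates
on solution mappings. -/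
inductive GP : Type
  | bgp : BGP → GP
  | and : GP → GP → GP
  | union : GP → GP → GP
  | minus : GP → GP → GP
  | fe : GP → GP → GP
  | fne : GP → GP → GP
  | filter : GP → (Mapping → Prop) → GP
  | opt : GP → GP → (Mapping → Prop) → GP

/-- Substitution `Pμ` on a graph pattern, applied componentwise to triple
patterns and recursively through the constructors; for filters, the
predicate is composed with `μ`. -/
def substGP (μ : Mapping) : GP → GP
  | .bgp P => .bgp (substBGP μ P)
  | .and P₁ P₂ => .and (substGP μ P₁) (substGP μ P₂)
  | .union P₁ P₂ => .union (substGP μ P₁) (substGP μ P₂)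
  | .minus P₁ P₂ => .minus (substGP μ P₁) (substGP μ P₂)
  | .fe P₁ P₂ => .fe (substGP μ P₁) (substGP μ P₂)
  | .fne P₁ P₂ => .fne (substGP μ P₁) (substGP μ P₂)
  | .filter P R => .filter (substGP μ P) (fun ν => R (munion μ ν))
  | .opt P₁ P₂ R => .opt (substGP μ P₁) (substGP μ P₂) (fun ν => R (munion μ ν))

/-- Structural depth (used as termination measure for `eval`). -/
def depth : GP → ℕ
  | .bgp _ => 0
  | .and P₁ P₂ => max (depth P₁) (depth P₂) + 1
  | .union P₁ P₂ => max (depth P₁) (depth P₂) + 1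
  | .minus P₁ P₂ => max (depth P₁) (depth P₂) + 1
  | .fe P₁ P₂ => max (depth P₁) (depth P₂) + 1
  | .fne P₁ P₂ => max (depth P₁) (depth P₂) + 1
  | .filter P _ => depth P + 1
  | .opt P₁ P₂ _ => max (depth P₁) (depth P₂) + 1

theorem depth_substGP (μ : Mapping) (P : GP) : depth (substGP μ P) = depth P := by
  induction P <;> simp [substGP, depth, *]

/-- The scope `sv` of a graph pattern. -/
def sv : GP → Finset Var
  | .bgp P => varsBGP P
  | .and P₁ P₂ => sv P₁ ∪ sv P₂
  | .union P₁ P₂ => sv P₁ ∪ sv P₂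
  | .minus P₁ _ => sv P₁
  | .fe P₁ _ => sv P₁
  | .fne P₁ _ => sv P₁
  | .filter P _ => sv P
  | .opt P₁ P₂ _ => sv P₁ ∪ sv P₂

/-- The variables `var(P)` occurring in a graph pattern. -/
def varsGP : GP → Finset Var
  | .bgp P => varsBGP P
  | .and P₁ P₂ => varsGP P₁ ∪ varsGP P₂
  | .union P₁ P₂ => varsGP P₁ ∪ varsGP P₂
  | .minus P₁ P₂ => varsGP P₁ ∪ varsGP P₂
  | .fe P₁ P₂ => varsGP P₁ ∪ varsGP P₂
  | .fne P₁ P₂ => varsGP P₁ ∪ varsGP P₂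
  | .filter P _ => varsGP P
  | .opt P₁ P₂ _ => varsGP P₁ ∪ varsGP P₂

/-- Evaluation `⟦P⟧_G` of SPARQL graph patterns over an RDF graph `G`. -/
def eval (G : Graph) : GP → Set Mapping
  | .bgp P => bgpEval G P
  | .and P₁ P₂ =>
      {μ | ∃ μ₁ ∈ eval G P₁, ∃ μ₂ ∈ eval G P₂, compat μ₁ μ₂ ∧ μ = munion μ₁ μ₂}
  | .union P₁ P₂ => eval G P₁ ∪ eval G P₂
  | .minus P₁ P₂ =>
      {μ ∈ eval G P₁ | ∀ μ' ∈ eval G P₂, ¬ compat μ μ' ∨ mdom μ ∩ mdom μ' = ∅}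
  | .fe P₁ P₂ =>
      {μ ∈ eval G P₁ | (eval G (substGP μ P₂)).Nonempty}
  | .fne P₁ P₂ =>
      {μ ∈ eval G P₁ | eval G (substGP μ P₂) = ∅}
  | .filter P R => {μ ∈ eval G P | R μ}
  | .opt P₁ P₂ R =>
      {μ | ∃ μ₁ ∈ eval G P₁, ∃ μ₂ ∈ eval G P₂,
          compat μ₁ μ₂ ∧ R (munion μ₁ μ₂) ∧ μ = munion μ₁ μ₂}
        ∪ {μ₁ ∈ eval G P₁ | ¬ ∃ μ₂ ∈ eval G P₂, compat μ₁ μ₂ ∧ R (munion μ₁ μ₂)}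
termination_by P => depth P
decreasing_by all_goals (simp [depth_substGP, depth]; try omega)

/-- A pattern contains no UNION and no OPT subpattern. -/
def NoUnionOpt : GP → Prop
  | .bgp _ => True
  | .and P₁ P₂ => NoUnionOpt P₁ ∧ NoUnionOpt P₂
  | .union _ _ => False
  | .minus P₁ P₂ => NoUnionOpt P₁ ∧ NoUnionOpt P₂
  | .fe P₁ P₂ => NoUnionOpt P₁ ∧ NoUnionOpt P₂
  | .fne P₁ P₂ => NoUnionOpt P₁ ∧ NoUnionOpt P₂
  | .filter P _ => NoUnionOpt P
  | .opt _ _ _ => False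

/-- Renaming of variables in a pattern term. -/
def renamePT (σ : Var → Var) : PTerm → PTerm
  | .inl t => .inl t
  | .inr v => .inr (σ v)

/-- Renaming of variables in a triple pattern. -/
def renameTP (σ : Var → Var) (t : TriplePat) : TriplePat :=
  (renamePT σ t.1, renamePT σ t.2.1, renamePT σ t.2.2)

/-- Renaming `Qσ` of variables in a BGP. -/
def renameBGP (σ : Var → Var) (P : BGP) : BGP := P.image (renameTP σ)

/-- Restriction of a mapping to a set of variables. -/
def restrict (μ : Mapping) (S : Finset Var) : Mapping :=
  fun x => if x ∈ S then μ x else none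


/-- A graph pattern built from BGPs using only the AND constructor. -/
def AndOnly : GP → Prop
  | .bgp _ => True
  | .and P₁ P₂ => AndOnly P₁ ∧ AndOnly P₂
  | _ => False

/-- The flattening of an AND-only pattern: the union of all its BGPs. -/
def flat : GP → BGP
  | .bgp P => P
  | .and P₁ P₂ => flat P₁ ∪ flat P₂
  | _ => ∅

lemma varsBGP_flat (P : GP) (hP : AndOnly P) : varsBGP (flat P) = sv P := by
  induction P with
  | bgp Q => rfl
  | and P₁ P₂ ih₁ ih₂ =>
    obtain ⟨h₁, h₂⟩ := hP
    simp only [flat, sv, varsBGP] at *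
    rw [← ih₁ h₁, ← ih₂ h₂]
    ext v
    simp only [Finset.mem_biUnion, Finset.mem_union]
    constructor
    · rintro ⟨tp, htp | htp, hv⟩
      · exact Or.inl ⟨tp, htp, hv⟩
      · exact Or.inr ⟨tp, htp, hv⟩
    · rintro (⟨tp, htp, hv⟩ | ⟨tp, htp, hv⟩)
      · exact ⟨tp, Or.inl htp, hv⟩
      · exact ⟨tp, Or.inr htp, hv⟩
  | _ => exact absurd hP (by simp [AndOnly])

lemma substPT_agree {μ μ' : Mapping} {p : PTerm}
    (h : ∀ v ∈ varsPT p, μ v = μ' v) : substPT μ p = substPT μ' p := by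
  cases p with
  | inl t => rfl
  | inr v => simp [substPT, h v (by simp [varsPT])]

lemma substTP_agree {μ μ' : Mapping} {tp : TriplePat}
    (h : ∀ v ∈ varsTP tp, μ v = μ' v) : substTP μ tp = substTP μ' tp := by
  unfold substTP
  rw [substPT_agree (fun v hv => h v (by simp [varsTP, hv])),
      substPT_agree (fun v hv => h v (by simp [varsTP, hv])),
      substPT_agree (fun v hv => h v (by simp [varsTP, hv]))]

lemma mdom_restrict (μ : Mapping) (S : Finset Var) (h : ↑S ⊆ mdom μ) :
    mdom (restrict μ S) = ↑S := by
  ext v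
  simp only [mdom, restrict, Set.mem_setOf_eq, Finset.mem_coe]
  constructor
  · intro hv
    by_contra hs
    rw [if_neg hs] at hv
    exact hv rfl
  · intro hv
    rw [if_pos hv]
    exact h (Finset.mem_coe.mpr hv)

lemma restrict_agree (μ : Mapping) (S : Finset Var) {v : Var} (hv : v ∈ S) :
    restrict μ S v = μ v := by simp [restrict, hv]

lemma mdom_munion (μ₁ μ₂ : Mapping) : mdom (munion μ₁ μ₂) = mdom μ₁ ∪ mdom μ₂ := by
  ext v
  simp only [mdom, munion, Set.mem_setOf_eq, Set.mem_union]
  cases μ₁ v <;> simp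

lemma eval_mdom (P : GP) (hP : AndOnly P) (G : Graph) {μ : Mapping}
    (h : μ ∈ eval G P) : mdom μ = ↑(sv P) := by
  induction P generalizing μ with
  | bgp Q =>
    rw [eval] at h
    exact h.1
  | and P₁ P₂ ih₁ ih₂ =>
    rw [eval] at h
    obtain ⟨μ₁, hμ₁, μ₂, hμ₂, hc, rfl⟩ := h
    rw [mdom_munion, ih₁ hP.1 hμ₁, ih₂ hP.2 hμ₂]
    simp [sv]
  | _ => exact absurd hP (by simp [AndOnly])

/-- For an AND-only pattern `P`, an RDF graph `G` and a mapping
`μ` with `dom(μ) = sv(P)`: `μ ∈ ⟦P⟧_G` iff `flat(P)μ ⊆ G`. -/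
theorem andOnly_eval_iff_flat (P : GP) (hP : AndOnly P) (G : Graph)
    (μ : Mapping) (hdom : mdom μ = ↑(sv P)) :
    μ ∈ eval G P ↔ InstIn G μ (flat P) := by
  induction P generalizing μ with
  | bgp Q =>
    rw [eval]
    exact ⟨fun h => h.2, fun h => ⟨hdom, h⟩⟩
  | and P₁ P₂ ih₁ ih₂ =>
    obtain ⟨h₁, h₂⟩ := hP
    rw [eval]
    constructor
    · rintro ⟨μ₁, hμ₁, μ₂, hμ₂, hc, rfl⟩
      have hd₁ := eval_mdom P₁ h₁ G hμ₁
      have hd₂ := eval_mdom P₂ h₂ G hμ₂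
      have hi₁ := (ih₁ h₁ μ₁ hd₁).mp hμ₁
      have hi₂ := (ih₂ h₂ μ₂ hd₂).mp hμ₂
      intro tp htp
      simp only [flat, Finset.mem_union] at htp
      rcases htp with htp | htp
      · obtain ⟨t, ht, hst⟩ := hi₁ tp htp
        refine ⟨t, ht, ?_⟩
        rw [← hst]
        apply substTP_agree
        intro v hv
        have hvd : v ∈ mdom μ₁ := by
          rw [hd₁, ← varsBGP_flat P₁ h₁]
          exact Finset.mem_coe.mpr (Finset.mem_biUnion.2 ⟨tp, htp, hv⟩)
        simp only [mdom, Set.mem_setOf_eq] at hvd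
        cases hμ : μ₁ v with
        | none => exact absurd hμ hvd
        | some a => simp [munion, hμ]
      · obtain ⟨t, ht, hst⟩ := hi₂ tp htp
        refine ⟨t, ht, ?_⟩
        rw [← hst]
        apply substTP_agree
        intro v hv
        have hvd : v ∈ mdom μ₂ := by
          rw [hd₂, ← varsBGP_flat P₂ h₂]
          exact Finset.mem_coe.mpr (Finset.mem_biUnion.2 ⟨tp, htp, hv⟩)
        simp only [mdom, Set.mem_setOf_eq] at hvd
        cases hμ : μ₂ v with
        | none => exact absurd hμ hvd
        | some a =>
          cases hμ' : μ₁ v with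
          | none => simp [munion, hμ', hμ]
          | some b => simp [munion, hμ', hμ, hc v b a hμ' hμ]
    · intro h
      have hsub₁ : ↑(sv P₁) ⊆ mdom μ := by
        rw [hdom]
        intro v hv
        simp only [sv, Finset.coe_union, Set.mem_union]
        left; exact hv
      have hsub₂ : ↑(sv P₂) ⊆ mdom μ := by
        rw [hdom]
        intro v hv
        simp only [sv, Finset.coe_union, Set.mem_union]
        right; exact hv
      refine ⟨restrict μ (sv P₁), ?_, restrict μ (sv P₂), ?_, ?_, ?_⟩
      · refine (ih₁ h₁ _ (mdom_restrict μ (sv P₁) hsub₁)).mpr ?_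
        intro tp htp
        obtain ⟨t, ht, hst⟩ := h tp (by simp [flat, htp])
        refine ⟨t, ht, ?_⟩
        rw [← hst]
        apply substTP_agree
        intro v hv
        exact restrict_agree μ (sv P₁)
          (by rw [← varsBGP_flat P₁ h₁]; exact Finset.mem_biUnion.2 ⟨tp, htp, hv⟩)
      · refine (ih₂ h₂ _ (mdom_restrict μ (sv P₂) hsub₂)).mpr ?_
        intro tp htp
        obtain ⟨t, ht, hst⟩ := h tp (by simp [flat, htp])
        refine ⟨t, ht, ?_⟩
        rw [← hst]
        apply substTP_agree
        intro v hv
        exact restrict_agree μ (sv P₂)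
          (by rw [← varsBGP_flat P₂ h₂]; exact Finset.mem_biUnion.2 ⟨tp, htp, hv⟩)
      · intro v a b ha hb
        simp only [restrict] at ha hb
        split at ha <;> split at hb <;> simp_all
      · funext v
        by_cases hv1 : v ∈ sv P₁ <;> by_cases hv2 : v ∈ sv P₂
        · simp only [munion, restrict, hv1, hv2, if_pos]
          cases μ v <;> rfl
        · simp only [munion, restrict, if_pos hv1, if_neg hv2]
          cases μ v <;> rfl
        · simp only [munion, restrict, if_pos hv2, if_neg hv1, Option.elim]
        · have hn : μ v = none := by
            by_contra hcon
            have hm : v ∈ mdom μ := hcon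
            rw [hdom] at hm
            simp only [sv, Finset.coe_union, Set.mem_union, Finset.mem_coe] at hm
            tauto
          simp [munion, restrict, hv1, hv2, hn]
  | _ => exact absurd hP (by simp [AndOnly])

end SparqlN3
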